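/- arXiv:2510.10101 — 4 statements merged into one kernel-verified Lean document; each statement's English description precedes it below -/
import Mathlib

section
/- Let m ≥ 1 and p ≥ 1, let c : {1,…,m} → {1,…,p} be a coloring, and let F be a nonempty set of vectors in ℝ^m each of which respects c. Suppose there is B ≥ 0 such that ‖f‖₂ = √(Σ_{i=1}^m f_i²) ≤ B for every f ∈ F. Then the empirical Rademacher complexity satisfies R(F) ≤ B·√p / m. -/
open Finset

noncomputable def radComplexity (m : ℕ) (F : Set (Fin m → ℝ)) : ℝ :=
  (∑ σ : Fin m → Bool,
      ⨆ f : F, (1 / (m : ℝ)) * ∑ i, (if σ i then (1 : ℝ) else -1) * (f : Fin m → ℝ) i) /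
    2 ^ m

namespace RadAux

variable {m p : ℕ}

noncomputable def eps (σ : Fin m → Bool) (i : Fin m) : ℝ := if σ i then 1 else -1

noncomputable def Sc (c : Fin m → Fin p) (σ : Fin m → Bool) (k : Fin p) : ℝ :=
  ∑ i ∈ univ.filter (fun i => c i = k), eps σ i

noncomputable def Nc (c : Fin m → Fin p) (k : Fin p) : ℝ :=
  ((univ.filter (fun i => c i = k)).card : ℝ)

lemma eps_sq (σ : Fin m → Bool) (i : Fin m) : eps σ i * eps σ i = 1 := by
  unfold eps; split <;> norm_num

lemma Nc_pos (c : Fin m → Fin p) (i : Fin m) : 0 < Nc c (c i) := by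
  unfold Nc
  have : i ∈ univ.filter (fun j => c j = c i) := by simp
  exact_mod_cast Finset.card_pos.mpr ⟨i, this⟩

lemma Nc_nonneg (c : Fin m → Fin p) (k : Fin p) : 0 ≤ Nc c k := by
  unfold Nc; positivity

/-- Cauchy-Schwarz with square roots. -/
lemma cs {ι : Type*} (s : Finset ι) (f g : ι → ℝ) :
    ∑ i ∈ s, f i * g i ≤ Real.sqrt (∑ i ∈ s, f i ^ 2) * Real.sqrt (∑ i ∈ s, g i ^ 2) := by
  have h := sum_mul_sq_le_sq_mul_sq s f g
  have h1 : ∑ i ∈ s, f i * g i ≤ |∑ i ∈ s, f i * g i| := le_abs_self _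
  refine h1.trans ?_
  rw [← Real.sqrt_sq_eq_abs, ← Real.sqrt_mul (by positivity)]
  exact Real.sqrt_le_sqrt h

lemma sum_eps_mul_eps (i j : Fin m) (hij : i ≠ j) :
    ∑ σ : Fin m → Bool, eps σ i * eps σ j = 0 := by
  have key : ∀ σ : Fin m → Bool,
      eps (Function.update σ i (!σ i)) i * eps (Function.update σ i (!σ i)) j
        = -(eps σ i * eps σ j) := by
    intro σ
    have h1 : eps (Function.update σ i (!σ i)) i = -(eps σ i) := by
      unfold eps
      rw [Function.update_self]
      cases σ i <;> simp
    have h2 : eps (Function.update σ i (!σ i)) j = eps σ j := by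
      unfold eps
      rw [Function.update_of_ne (Ne.symm hij)]
    rw [h1, h2]; ring
  let e : (Fin m → Bool) ≃ (Fin m → Bool) :=
    ⟨fun σ => Function.update σ i (!σ i), fun σ => Function.update σ i (!σ i),
     fun σ => by
       simp [Function.update_idem, Function.update_self, Function.update_eq_self],
     fun σ => by
       simp [Function.update_idem, Function.update_self, Function.update_eq_self]⟩
  have hcomp := Equiv.sum_comp e (fun σ => eps σ i * eps σ j)
  have h2 : ∑ σ : Fin m → Bool, eps (e σ) i * eps (e σ) j
      = -∑ σ : Fin m → Bool, eps σ i * eps σ j := by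
    rw [← Finset.sum_neg_distrib]
    exact Finset.sum_congr rfl fun σ _ => key σ
  rw [hcomp] at h2
  linarith

lemma card_bool_fun : (Fintype.card (Fin m → Bool) : ℝ) = 2 ^ m := by
  simp [Fintype.card_fun]

lemma sum_Sc_sq (c : Fin m → Fin p) (k : Fin p) :
    ∑ σ : Fin m → Bool, (Sc c σ k) ^ 2 = 2 ^ m * Nc c k := by
  classical
  unfold Sc Nc
  have expand : ∀ σ : Fin m → Bool,
      (∑ i ∈ univ.filter (fun i => c i = k), eps σ i) ^ 2
        = ∑ i ∈ univ.filter (fun i => c i = k), ∑ j ∈ univ.filter (fun i => c i = k),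
            eps σ i * eps σ j := by
    intro σ
    rw [sq, Finset.sum_mul_sum]
  simp_rw [expand]
  rw [Finset.sum_comm]
  rw [Finset.sum_congr rfl (fun i _ => Finset.sum_comm)]
  have H : ∀ i ∈ univ.filter (fun i => c i = k), ∀ j ∈ univ.filter (fun i => c i = k),
      ∑ σ : Fin m → Bool, eps σ i * eps σ j = if i = j then (2:ℝ)^m else 0 := by
    intro i _ j _
    by_cases hij : i = j
    · subst hij
      simp only [if_pos rfl]
      rw [Finset.sum_congr rfl (fun σ _ => eps_sq σ i), Finset.sum_const, nsmul_eq_mul, mul_one]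
      exact card_bool_fun
    · rw [if_neg hij]
      exact sum_eps_mul_eps i j hij
  rw [Finset.sum_congr rfl (fun i hi => Finset.sum_congr rfl (fun j hj => H i hi j hj))]
  have H2 : ∀ i ∈ univ.filter (fun i => c i = k),
      ∑ j ∈ univ.filter (fun i => c i = k), (if i = j then (2:ℝ)^m else 0) = 2 ^ m := by
    intro i hi
    rw [Finset.sum_ite_eq]
    simp only [hi, if_true]
  rw [Finset.sum_congr rfl H2, Finset.sum_const, nsmul_eq_mul, mul_comm]

end RadAux

open RadAux in
theorem rademacher_le_of_l2_bound (m p : ℕ) (hm : 1 ≤ m) (hp : 1 ≤ p)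
    (c : Fin m → Fin p) (F : Set (Fin m → ℝ)) (hFne : F.Nonempty)
    (hresp : ∀ f ∈ F, ∀ i j : Fin m, c i = c j → f i = f j)
    (B : ℝ) (hB : 0 ≤ B)
    (hnorm : ∀ f ∈ F, Real.sqrt (∑ i, f i ^ 2) ≤ B) :
    radComplexity m F ≤ B * Real.sqrt p / m := by
  classical
  haveI : Nonempty F := hFne.to_subtype
  set g : (Fin m → Bool) → Fin m → ℝ := fun σ i => Sc c σ (c i) / Nc c (c i) with hg
  -- Step 1: regrouping identity
  have regroup : ∀ f ∈ F, ∀ σ : Fin m → Bool,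
      ∑ i, eps σ i * f i = ∑ i, g σ i * f i := by
    intro f hf σ
    have step1 : ∑ i, g σ i * f i
        = ∑ i, ∑ j, (if c j = c i then eps σ j * f i / Nc c (c i) else 0) := by
      refine Finset.sum_congr rfl fun i _ => ?_
      rw [hg]
      simp only [Sc]
      rw [Finset.sum_filter, Finset.sum_div, Finset.sum_mul]
      refine Finset.sum_congr rfl fun j _ => ?_
      split <;> simp [div_mul_eq_mul_div]
    rw [step1, Finset.sum_comm]
    refine Finset.sum_congr rfl fun j _ => ?_
    have hsw : ∀ i, (if c j = c i then eps σ j * f i / Nc c (c i) else 0)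
        = (if c i = c j then eps σ j * f j / Nc c (c j) else 0) := by
      intro i
      by_cases h : c i = c j
      · rw [if_pos h.symm, if_pos h, hresp f hf i j h, h]
      · rw [if_neg (fun hh => h hh.symm), if_neg h]
    rw [Finset.sum_congr rfl fun i _ => hsw i, ← Finset.sum_filter, Finset.sum_const,
      nsmul_eq_mul]
    have hNc := (Nc_pos c j).ne'
    unfold Nc at hNc ⊢
    field_simp
  -- Step 2: pointwise sup bound
  set X : (Fin m → Bool) → ℝ := fun σ => Real.sqrt (∑ i, g σ i ^ 2) with hX
  have hXnn : ∀ σ, 0 ≤ X σ := fun σ => Real.sqrt_nonneg _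
  have sup_bound : ∀ σ : Fin m → Bool,
      (⨆ f : F, (1 / (m : ℝ)) * ∑ i, (if σ i then (1 : ℝ) else -1) * (f : Fin m → ℝ) i)
        ≤ (1 / (m : ℝ)) * (B * X σ) := by
    intro σ
    refine ciSup_le fun f => ?_
    have hfF : (f : Fin m → ℝ) ∈ F := f.2
    have h1 : ∑ i, (if σ i then (1 : ℝ) else -1) * (f : Fin m → ℝ) i
        = ∑ i, g σ i * (f : Fin m → ℝ) i := regroup f hfF σ
    have h2 : ∑ i, g σ i * (f : Fin m → ℝ) i
        ≤ Real.sqrt (∑ i, g σ i ^ 2) * Real.sqrt (∑ i, (f : Fin m → ℝ) i ^ 2) :=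
      cs univ _ _
    have h3 : Real.sqrt (∑ i, g σ i ^ 2) * Real.sqrt (∑ i, (f : Fin m → ℝ) i ^ 2)
        ≤ X σ * B := by
      exact mul_le_mul_of_nonneg_left (hnorm _ hfF) (hXnn σ)
    have : ∑ i, (if σ i then (1 : ℝ) else -1) * (f : Fin m → ℝ) i ≤ B * X σ := by
      rw [h1, mul_comm B (X σ)]
      exact h2.trans h3
    have hm0 : (0:ℝ) ≤ 1 / (m : ℝ) := by positivity
    exact mul_le_mul_of_nonneg_left this hm0
  -- Step 3: sum of X² bound
  have sumXsq : ∑ σ : Fin m → Bool, X σ ^ 2 ≤ 2 ^ m * p := by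
    have hXsq : ∀ σ, X σ ^ 2 = ∑ i, g σ i ^ 2 := by
      intro σ
      rw [hX]
      exact Real.sq_sqrt (by positivity)
    calc ∑ σ : Fin m → Bool, X σ ^ 2 = ∑ σ : Fin m → Bool, ∑ i, g σ i ^ 2 := by
          exact Finset.sum_congr rfl fun σ _ => hXsq σ
      _ = ∑ i, ∑ σ : Fin m → Bool, g σ i ^ 2 := Finset.sum_comm
      _ = ∑ i : Fin m, 2 ^ m / Nc c (c i) := by
          refine Finset.sum_congr rfl fun i _ => ?_
          have : ∀ σ : Fin m → Bool, g σ i ^ 2 = Sc c σ (c i) ^ 2 / Nc c (c i) ^ 2 := by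
            intro σ; rw [hg]; rw [div_pow]
          rw [Finset.sum_congr rfl fun σ _ => this σ, ← Finset.sum_div, sum_Sc_sq]
          have hNc := (Nc_pos c i).ne'
          field_simp
      _ = ∑ k : Fin p, ∑ i ∈ univ.filter (fun i => c i = k), 2 ^ m / Nc c (c i) := by
          rw [← Finset.sum_fiberwise univ c (fun i => (2:ℝ) ^ m / Nc c (c i))]
      _ ≤ ∑ k : Fin p, (2:ℝ) ^ m := by
          refine Finset.sum_le_sum fun k _ => ?_
          have : ∀ i ∈ univ.filter (fun i => c i = k), (2:ℝ) ^ m / Nc c (c i)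
              = 2 ^ m / Nc c k := by
            intro i hi
            simp only [mem_filter] at hi
            rw [hi.2]
          rw [Finset.sum_congr rfl this, Finset.sum_const, nsmul_eq_mul]
          unfold Nc
          rcases Nat.eq_zero_or_pos (univ.filter (fun i => c i = k)).card with h | h
          · rw [h]
            norm_num
          · rw [mul_comm, div_mul_cancel₀ _ (by exact_mod_cast h.ne' : ((univ.filter (fun i => c i = k)).card : ℝ) ≠ 0)]
      _ = 2 ^ m * p := by simp [mul_comm]
  -- Step 4: sum of X bound
  have sumX : ∑ σ : Fin m → Bool, X σ ≤ 2 ^ m * Real.sqrt p := by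
    have h1 : (∑ σ : Fin m → Bool, X σ) ^ 2
        ≤ (∑ σ : Fin m → Bool, (1:ℝ) ^ 2) * ∑ σ : Fin m → Bool, X σ ^ 2 := by
      have := sum_mul_sq_le_sq_mul_sq univ (fun _ : Fin m → Bool => (1:ℝ)) X
      simpa using this
    have h2 : (∑ σ : Fin m → Bool, (1:ℝ) ^ 2) = 2 ^ m := by
      rw [Finset.sum_const, nsmul_eq_mul]
      simpa using (card_bool_fun (m := m))
    have h3 : (∑ σ : Fin m → Bool, X σ) ^ 2 ≤ 2 ^ m * (2 ^ m * p) := by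
      rw [h2] at h1
      exact h1.trans (mul_le_mul_of_nonneg_left sumXsq (by positivity))
    have h4 : (0:ℝ) ≤ ∑ σ : Fin m → Bool, X σ := Finset.sum_nonneg fun σ _ => hXnn σ
    have h5 := Real.sqrt_le_sqrt h3
    have heq : (2:ℝ) ^ m * (2 ^ m * p) = ((2:ℝ) ^ m) ^ 2 * p := by ring
    rw [Real.sqrt_sq h4, heq, Real.sqrt_mul (by positivity),
      Real.sqrt_sq (by positivity : (0:ℝ) ≤ 2 ^ m)] at h5
    exact h5
  -- Final assembly
  have hsum : ∑ σ : Fin m → Bool,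
      (⨆ f : F, (1 / (m : ℝ)) * ∑ i, (if σ i then (1 : ℝ) else -1) * (f : Fin m → ℝ) i)
        ≤ (1 / (m : ℝ)) * B * (2 ^ m * Real.sqrt p) := by
    calc ∑ σ : Fin m → Bool,
        (⨆ f : F, (1 / (m : ℝ)) * ∑ i, (if σ i then (1 : ℝ) else -1) * (f : Fin m → ℝ) i)
        ≤ ∑ σ : Fin m → Bool, (1 / (m : ℝ)) * (B * X σ) :=
          Finset.sum_le_sum fun σ _ => sup_bound σ
      _ = (1 / (m : ℝ)) * B * ∑ σ : Fin m → Bool, X σ := by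
          rw [Finset.mul_sum]
          exact Finset.sum_congr rfl fun σ _ => by ring
      _ ≤ (1 / (m : ℝ)) * B * (2 ^ m * Real.sqrt p) := by
          have : (0:ℝ) ≤ (1 / (m : ℝ)) * B := by positivity
          exact mul_le_mul_of_nonneg_left sumX this
  unfold radComplexity
  rw [div_le_iff₀ (by positivity : (0:ℝ) < 2 ^ m)]
  calc _ ≤ (1 / (m : ℝ)) * B * (2 ^ m * Real.sqrt p) := hsum
    _ = B * Real.sqrt p / m * 2 ^ m := by field_simp
end

section
/- Let m ≥ 1 and p ≥ 1, let c : {1,…,m} → {1,…,p} be a coloring, and let F be a nonempty set of vectors in ℝ^m each of which respects c and satisfies f_i ∈ [-1,1] for all i. Then the empirical Rademacher complexity satisfies R(F) ≤ √(p/m). -/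
open Finset

/-- sign of coordinate `i`. -/
noncomputable def eps {m : ℕ} (σ : Fin m → Bool) (i : Fin m) : ℝ :=
  if σ i then 1 else -1

lemma eps_flip {m : ℕ} (σ : Fin m → Bool) (i : Fin m) :
    eps (Function.update σ i (!σ i)) i = -eps σ i := by
  simp [eps, Function.update_self]
  cases σ i <;> simp

lemma sum_eps_mul_eps {m : ℕ} (i j : Fin m) (hij : i ≠ j) :
    ∑ σ : Fin m → Bool, eps σ i * eps σ j = 0 := by
  have hinv : Function.Involutive (fun σ : Fin m → Bool => Function.update σ i (!σ i)) := by
    intro σ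
    funext k
    by_cases hk : k = i
    · subst hk; simp
    · simp [Function.update_of_ne hk]
  have key : ∑ σ : Fin m → Bool, -(eps σ i * eps σ j)
      = ∑ σ : Fin m → Bool, eps σ i * eps σ j := by
    refine Fintype.sum_bijective _ hinv.bijective _ _ ?_
    intro σ
    have hji : eps (Function.update σ i (!σ i)) j = eps σ j := by
      simp [eps, Function.update_of_ne (Ne.symm hij)]
    have hii : eps (Function.update σ i (!σ i)) i = -eps σ i := eps_flip σ i
    rw [hii, hji]; ring
  rw [Finset.sum_neg_distrib] at key
  linarith

lemma eps_mul_self {m : ℕ} (σ : Fin m → Bool) (i : Fin m) : eps σ i * eps σ i = 1 := by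
  simp only [eps]; cases σ i <;> norm_num

lemma sum_S_sq {m : ℕ} (A : Finset (Fin m)) :
    ∑ σ : Fin m → Bool, (∑ i ∈ A, eps σ i) ^ 2 = 2 ^ m * A.card := by
  have h1 : ∀ σ : Fin m → Bool, (∑ i ∈ A, eps σ i) ^ 2
      = ∑ i ∈ A, ∑ j ∈ A, eps σ i * eps σ j := by
    intro σ; rw [sq, Finset.sum_mul_sum]
  simp_rw [h1]
  rw [Finset.sum_comm]
  have h2 : ∀ i ∈ A, (∑ j ∈ A, ∑ σ : Fin m → Bool, eps σ i * eps σ j) = 2 ^ m := by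
    intro i hi
    rw [Finset.sum_eq_single i]
    · have : ∀ σ : Fin m → Bool, eps σ i * eps σ i = 1 := fun σ => eps_mul_self σ i
      simp_rw [this]
      simp [Fintype.card_fun]
    · intro j _ hj; exact sum_eps_mul_eps i j (Ne.symm hj)
    · intro h; exact absurd hi h
  calc ∑ i ∈ A, ∑ σ : Fin m → Bool, ∑ j ∈ A, eps σ i * eps σ j
      = ∑ i ∈ A, ∑ j ∈ A, ∑ σ : Fin m → Bool, eps σ i * eps σ j := by
        refine Finset.sum_congr rfl fun i _ => ?_
        rw [Finset.sum_comm]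
    _ = ∑ i ∈ A, (2:ℝ) ^ m := Finset.sum_congr rfl h2
    _ = 2 ^ m * A.card := by rw [Finset.sum_const]; ring

theorem rademacher_le_sqrt_colors_div (m p : ℕ) (hm : 1 ≤ m) (hp : 1 ≤ p)
    (c : Fin m → Fin p) (F : Set (Fin m → ℝ)) (hFne : F.Nonempty)
    (hresp : ∀ f ∈ F, ∀ i j : Fin m, c i = c j → f i = f j)
    (hbdd : ∀ f ∈ F, ∀ i, f i ∈ Set.Icc (-1 : ℝ) 1) :
    radComplexity m F ≤ Real.sqrt ((p : ℝ) / m) := by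
  have hFne' : Nonempty F := hFne.to_subtype
  have hm0 : (0:ℝ) < m := by exact_mod_cast hm
  set A : Fin p → Finset (Fin m) := fun k => Finset.univ.filter (fun i => c i = k) with hA
  set S : Fin p → (Fin m → Bool) → ℝ := fun k σ => ∑ i ∈ A k, eps σ i with hS
  -- Step 1: pointwise bound on the sup
  have step1 : ∀ σ : Fin m → Bool,
      (⨆ f : F, (1 / (m : ℝ)) * ∑ i, (if σ i then (1:ℝ) else -1) * (f : Fin m → ℝ) i)
        ≤ (1 / (m : ℝ)) * ∑ k, |S k σ| := by
    intro σ
    refine ciSup_le fun f => ?_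
    have hfF := f.2
    have key : ∑ i, (if σ i then (1:ℝ) else -1) * (f : Fin m → ℝ) i ≤ ∑ k, |S k σ| := by
      have hsplit : ∑ i, (if σ i then (1:ℝ) else -1) * (f : Fin m → ℝ) i
          = ∑ k, ∑ i ∈ A k, eps σ i * (f : Fin m → ℝ) i := by
        rw [hA]
        exact (Finset.sum_fiberwise Finset.univ c
          (fun i => eps σ i * (f : Fin m → ℝ) i)).symm
      rw [hsplit]
      refine Finset.sum_le_sum fun k _ => ?_
      rcases Finset.eq_empty_or_nonempty (A k) with h | ⟨i0, hi0⟩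
      · simp [hS, h]
      · have hconst : ∀ i ∈ A k, (f : Fin m → ℝ) i = (f : Fin m → ℝ) i0 := by
          intro i hi
          refine hresp _ hfF i i0 ?_
          have h1 : c i = k := (Finset.mem_filter.mp hi).2
          have h2 : c i0 = k := (Finset.mem_filter.mp hi0).2
          rw [h1, h2]
        calc ∑ i ∈ A k, eps σ i * (f : Fin m → ℝ) i
            = ∑ i ∈ A k, eps σ i * (f : Fin m → ℝ) i0 :=
              Finset.sum_congr rfl fun i hi => by rw [hconst i hi]
          _ = (f : Fin m → ℝ) i0 * S k σ := by
              rw [hS, Finset.mul_sum]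
              exact Finset.sum_congr rfl fun i _ => mul_comm _ _
          _ ≤ |(f : Fin m → ℝ) i0 * S k σ| := le_abs_self _
          _ = |(f : Fin m → ℝ) i0| * |S k σ| := abs_mul _ _
          _ ≤ 1 * |S k σ| := by
              have := hbdd _ hfF i0
              have : |(f : Fin m → ℝ) i0| ≤ 1 := abs_le.mpr ⟨this.1, this.2⟩
              exact mul_le_mul_of_nonneg_right this (abs_nonneg _)
          _ = |S k σ| := one_mul _
    have h1m : (0:ℝ) ≤ 1 / (m:ℝ) := by positivity
    exact mul_le_mul_of_nonneg_left key h1m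
  -- Step 2: per-color average bound
  have step2 : ∀ k : Fin p,
      ∑ σ : Fin m → Bool, |S k σ| ≤ 2 ^ m * Real.sqrt ((A k).card) := by
    intro k
    have hsq : (∑ σ : Fin m → Bool, |S k σ|) ^ 2
        ≤ (2:ℝ) ^ m * (2 ^ m * (A k).card) := by
      calc (∑ σ : Fin m → Bool, |S k σ|) ^ 2
          ≤ (Finset.univ.card : ℝ) * ∑ σ : Fin m → Bool, |S k σ| ^ 2 :=
            sq_sum_le_card_mul_sum_sq
        _ = (2:ℝ) ^ m * ∑ σ : Fin m → Bool, (S k σ) ^ 2 := by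
            simp [sq_abs, Finset.card_univ, Fintype.card_fun]
        _ = (2:ℝ) ^ m * (2 ^ m * (A k).card) := by rw [hS]; rw [sum_S_sq]
    have hnn : (0:ℝ) ≤ ∑ σ : Fin m → Bool, |S k σ| :=
      Finset.sum_nonneg fun _ _ => abs_nonneg _
    have h2 : (2:ℝ) ^ m * Real.sqrt ((A k).card)
        = Real.sqrt ((2:ℝ) ^ m * (2 ^ m * (A k).card)) := by
      rw [show (2:ℝ) ^ m * (2 ^ m * (A k).card) = ((2:ℝ)^m)^2 * (A k).card by ring,
        Real.sqrt_mul (by positivity), Real.sqrt_sq (by positivity)]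
    rw [h2]
    calc ∑ σ : Fin m → Bool, |S k σ|
        = Real.sqrt ((∑ σ : Fin m → Bool, |S k σ|) ^ 2) := (Real.sqrt_sq hnn).symm
      _ ≤ Real.sqrt ((2:ℝ) ^ m * (2 ^ m * (A k).card)) := Real.sqrt_le_sqrt hsq
  -- Step 3: Cauchy-Schwarz over colors
  have hcard : ∑ k, ((A k).card : ℝ) = m := by
    have : ∑ k, ∑ i ∈ A k, (1:ℝ) = ∑ i : Fin m, (1:ℝ) :=
      Finset.sum_fiberwise Finset.univ c (fun _ => (1:ℝ))
    simpa using this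
  have step3 : ∑ k, Real.sqrt ((A k).card) ≤ Real.sqrt ((p:ℝ) * m) := by
    have hsq : (∑ k, Real.sqrt ((A k).card)) ^ 2 ≤ (p:ℝ) * m := by
      calc (∑ k, Real.sqrt ((A k).card)) ^ 2
          ≤ (Finset.univ.card : ℝ) * ∑ k, Real.sqrt ((A k).card) ^ 2 :=
            sq_sum_le_card_mul_sum_sq
        _ = (p:ℝ) * ∑ k, ((A k).card : ℝ) := by
            simp [Real.sq_sqrt (by positivity : (0:ℝ) ≤ _), Finset.card_univ]
        _ = (p:ℝ) * m := by rw [hcard]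
    have hnn : (0:ℝ) ≤ ∑ k, Real.sqrt ((A k).card) :=
      Finset.sum_nonneg fun _ _ => Real.sqrt_nonneg _
    calc ∑ k, Real.sqrt ((A k).card)
        = Real.sqrt ((∑ k, Real.sqrt ((A k).card)) ^ 2) := (Real.sqrt_sq hnn).symm
      _ ≤ Real.sqrt ((p:ℝ) * m) := Real.sqrt_le_sqrt hsq
  -- Combine
  have hmain : radComplexity m F ≤ (1 / (m:ℝ)) * Real.sqrt ((p:ℝ) * m) := by
    unfold radComplexity
    rw [div_le_iff₀ (by positivity : (0:ℝ) < 2 ^ m)]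
    calc (∑ σ : Fin m → Bool,
          ⨆ f : F, (1 / (m : ℝ)) * ∑ i, (if σ i then (1:ℝ) else -1) * (f : Fin m → ℝ) i)
        ≤ ∑ σ : Fin m → Bool, (1 / (m : ℝ)) * ∑ k, |S k σ| :=
          Finset.sum_le_sum fun σ _ => step1 σ
      _ = (1 / (m : ℝ)) * ∑ k, ∑ σ : Fin m → Bool, |S k σ| := by
          rw [← Finset.mul_sum, Finset.sum_comm]
      _ ≤ (1 / (m : ℝ)) * ∑ k, 2 ^ m * Real.sqrt ((A k).card) := by
          refine mul_le_mul_of_nonneg_left ?_ (by positivity)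
          exact Finset.sum_le_sum fun k _ => step2 k
      _ = (1 / (m : ℝ)) * Real.sqrt ((p:ℝ) * m) * 2 ^ m
          - (1 / (m : ℝ)) * 2 ^ m * (Real.sqrt ((p:ℝ) * m) - ∑ k, Real.sqrt ((A k).card)) := by
          rw [← Finset.mul_sum]; ring
      _ ≤ (1 / (m : ℝ)) * Real.sqrt ((p:ℝ) * m) * 2 ^ m := by
          have hd : (0:ℝ) ≤ Real.sqrt ((p:ℝ) * m) - ∑ k, Real.sqrt ((A k).card) := by
            linarith [step3]
          have : (0:ℝ) ≤ (1 / (m : ℝ)) * 2 ^ m * (Real.sqrt ((p:ℝ) * m)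
              - ∑ k, Real.sqrt ((A k).card)) := by positivity
          linarith
  have hfinal : (1 / (m:ℝ)) * Real.sqrt ((p:ℝ) * m) = Real.sqrt ((p:ℝ) / m) := by
    calc (1 / (m:ℝ)) * Real.sqrt ((p:ℝ) * m)
        = Real.sqrt ((1 / (m:ℝ))^2) * Real.sqrt ((p:ℝ) * m) := by
          rw [Real.sqrt_sq (by positivity)]
      _ = Real.sqrt ((1 / (m:ℝ))^2 * ((p:ℝ) * m)) := (Real.sqrt_mul (by positivity) _).symm
      _ = Real.sqrt ((p:ℝ) / m) := by
          congr 1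
          field_simp
  rw [← hfinal]
  exact hmain
end

section
/- Let m ≥ 1 and p ≥ 1 with p dividing m, and let c : {1,…,m} → {1,…,p} be a surjective coloring all of whose fibers I_j = c⁻¹(j) have the same cardinality m/p. Let F be the set of ALL vectors f ∈ [-1,1]^m that respect c. Then the empirical Rademacher complexity satisfies R(F) ≥ √(p/(2m)). -/
/-!
For a sign vector `σ`, the vector equal on each colour class `I_j` to the sign of
`∑_{i ∈ I_j} σ_i` lies in `F`, so the supremum is at least `(1/m) ∑_j |∑_{i ∈ I_j} σ_i|`.
Averaging over `σ`, each class contributes `E|S_{m/p}|`, where `S_n` is a sum of `n` independent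
signs, and the claim reduces to Khintchine's bound `E|S_n| ≥ √(n/2)`.

For the latter, `|s + 1| + |s - 1| = 2|s| + 2·[s = 0]` gives `E|S_{n+1}| ≥ E|S_n| + P(S_n = 0)`,
and `P(S_{2k} = 0) = C(2k,k)/4^k ≥ 1/√(4k+1)`. As `√k + 1/√(4k+1) ≥ √(k+1)`, induction gives
`E|S_{2k}| ≥ √k`, and one more step gives `E|S_{2k+1}| ≥ √(k+1)`.
-/

open Finset

noncomputable def boolSign (b : Bool) : ℝ := if b then 1 else -1

noncomputable def meanAbsSignSum (n : ℕ) : ℝ :=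
  (∑ σ : Fin n → Bool, |∑ i, boolSign (σ i)|) / 2 ^ n

noncomputable def probSignSumEqZero (n : ℕ) : ℝ :=
  #{σ : Fin n → Bool | ∑ i, boolSign (σ i) = 0} / 2 ^ n

@[simp] lemma boolSign_true : boolSign true = 1 := if_pos rfl

@[simp] lemma boolSign_false : boolSign false = -1 := if_neg Bool.false_ne_true

lemma two_mul_abs_add_ite_le (s : ℝ) :
    2 * |s| + (if s = 0 then 2 else 0) ≤ |s + 1| + |s - 1| := by
  split_ifs with hs
  · norm_num [hs]
  · calc 2 * |s| + 0 = |(s + 1) + (s - 1)| := by rw [add_zero, ← abs_two, ← abs_mul]; ring_nf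
      _ ≤ |s + 1| + |s - 1| := abs_add_le _ _

lemma sum_abs_sum_boolSign_succ (n : ℕ) :
    ∑ σ : Fin (n + 1) → Bool, |∑ i, boolSign (σ i)| =
      ∑ τ : Fin n → Bool, (|∑ i, boolSign (τ i) + 1| + |∑ i, boolSign (τ i) - 1|) := by
  rw [← (Fin.consEquiv fun _ => Bool).sum_comp, Fintype.sum_prod_type, Fintype.sum_bool,
    ← sum_add_distrib]
  refine sum_congr rfl fun τ _ => ?_
  simp only [Fin.consEquiv_apply, Fin.sum_univ_succ, Fin.cons_zero, Fin.cons_succ,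
    boolSign_true, boolSign_false]
  ring_nf

lemma meanAbsSignSum_add_probSignSumEqZero_le (n : ℕ) :
    meanAbsSignSum n + probSignSumEqZero n ≤ meanAbsSignSum (n + 1) := by
  have hsum : 2 * ∑ σ : Fin n → Bool, |∑ i, boolSign (σ i)| +
      2 * (#{σ : Fin n → Bool | ∑ i, boolSign (σ i) = 0} : ℝ) ≤
      ∑ σ : Fin (n + 1) → Bool, |∑ i, boolSign (σ i)| := by
    rw [sum_abs_sum_boolSign_succ, card_filter, Nat.cast_sum, mul_sum, mul_sum, ← sum_add_distrib]
    refine sum_le_sum fun τ _ => le_of_eq_of_le ?_ (two_mul_abs_add_ite_le _)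
    split_ifs <;> simp
  rw [meanAbsSignSum, meanAbsSignSum, probSignSumEqZero, ← add_div, pow_succ,
    div_le_div_iff₀ (by positivity) (by positivity)]
  nlinarith [pow_pos (two_pos : (0 : ℝ) < 2) n]

lemma sum_boolSign_decide_mem {n : ℕ} (s : Finset (Fin n)) :
    ∑ i, boolSign (decide (i ∈ s)) = 2 * #s - n := by
  have h : ∀ i, boolSign (decide (i ∈ s)) = 2 * (if i ∈ s then 1 else 0) - 1 := by
    intro i; by_cases hi : i ∈ s <;> simp [hi, boolSign]; norm_num
  simp_rw [h, sum_sub_distrib, ← mul_sum, sum_boole]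
  simp

lemma centralBinom_div_four_pow_le_probSignSumEqZero (k : ℕ) :
    (k.centralBinom : ℝ) / 4 ^ k ≤ probSignSumEqZero (2 * k) := by
  have hcard : k.centralBinom ≤ #{σ : Fin (2 * k) → Bool | ∑ i, boolSign (σ i) = 0} := by
    have : k.centralBinom = #(powersetCard k (univ : Finset (Fin (2 * k)))) := by
      simp [Nat.centralBinom]
    rw [this]
    refine card_le_card_of_injOn (fun s i => decide (i ∈ s)) (fun s hs => ?_) fun s _ t _ h => ?_
    · rw [mem_coe, mem_powersetCard_univ] at hs
      simp [sum_boolSign_decide_mem, hs]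
    · ext i; simpa using congrFun h i
  rw [probSignSumEqZero, pow_mul, show (2 : ℝ) ^ 2 = 4 by norm_num]
  gcongr

lemma four_pow_sq_le_mul_centralBinom_sq (k : ℕ) :
    (4 ^ k) ^ 2 ≤ (4 * k + 1) * k.centralBinom ^ 2 := by
  induction k with
  | zero => simp
  | succ k ih =>
    refine Nat.le_of_mul_le_mul_left ?_ (by positivity : 0 < (k + 1) ^ 2)
    calc (k + 1) ^ 2 * (4 ^ (k + 1)) ^ 2 = 16 * (k + 1) ^ 2 * (4 ^ k) ^ 2 := by ring
      _ ≤ 16 * (k + 1) ^ 2 * ((4 * k + 1) * k.centralBinom ^ 2) := by gcongr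
      _ ≤ (4 * (k + 1) + 1) * (2 * (2 * k + 1) * k.centralBinom) ^ 2 := by
        nlinarith [Nat.zero_le (k.centralBinom ^ 2)]
      _ = (k + 1) ^ 2 * ((4 * (k + 1) + 1) * (k + 1).centralBinom ^ 2) := by
        rw [← Nat.succ_mul_centralBinom_succ]; ring

lemma sqrt_add_one_le_sqrt_add {k q : ℝ} (hk : 0 ≤ k) (hq : 0 ≤ q)
    (h : 1 ≤ (4 * k + 1) * q ^ 2) : √(k + 1) ≤ √k + q := by
  have hs := Real.sq_sqrt hk
  have ht := Real.sqrt_nonneg k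
  rw [Real.sqrt_le_iff]
  refine ⟨by positivity, ?_⟩
  nlinarith [mul_nonneg ht hq, sq_nonneg (2 * √k * q + q ^ 2 - 1)]

lemma meanAbsSignSum_le_succ (n : ℕ) : meanAbsSignSum n ≤ meanAbsSignSum (n + 1) := by
  have : 0 ≤ probSignSumEqZero n := by unfold probSignSumEqZero; positivity
  linarith [meanAbsSignSum_add_probSignSumEqZero_le n]

lemma sqrt_add_one_le_meanAbsSignSum_two_mul_add_one {k : ℕ}
    (h : √k ≤ meanAbsSignSum (2 * k)) : √(k + 1) ≤ meanAbsSignSum (2 * k + 1) := by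
  have hC : 1 ≤ (4 * k + 1) * ((k.centralBinom : ℝ) / 4 ^ k) ^ 2 := by
    rw [div_pow, ← mul_div_assoc, one_le_div (by positivity)]
    exact_mod_cast four_pow_sq_le_mul_centralBinom_sq k
  calc √(k + 1) ≤ √k + k.centralBinom / 4 ^ k :=
        sqrt_add_one_le_sqrt_add k.cast_nonneg (by positivity) hC
    _ ≤ meanAbsSignSum (2 * k) + probSignSumEqZero (2 * k) :=
        add_le_add h (centralBinom_div_four_pow_le_probSignSumEqZero k)
    _ ≤ meanAbsSignSum (2 * k + 1) := meanAbsSignSum_add_probSignSumEqZero_le _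

lemma sqrt_le_meanAbsSignSum_two_mul (k : ℕ) : √k ≤ meanAbsSignSum (2 * k) := by
  induction k with
  | zero => simp [meanAbsSignSum]
  | succ k ih =>
    push_cast
    exact (sqrt_add_one_le_meanAbsSignSum_two_mul_add_one ih).trans (meanAbsSignSum_le_succ _)

theorem sqrt_half_le_meanAbsSignSum (n : ℕ) : √(n / 2) ≤ meanAbsSignSum n := by
  obtain ⟨k, rfl | rfl⟩ := Nat.even_or_odd' n
  · simpa using sqrt_le_meanAbsSignSum_two_mul k
  · calc √(((2 * k + 1 : ℕ) : ℝ) / 2) ≤ √(k + 1) := Real.sqrt_le_sqrt (by push_cast; linarith)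
      _ ≤ _ := sqrt_add_one_le_meanAbsSignSum_two_mul_add_one (sqrt_le_meanAbsSignSum_two_mul k)

lemma sum_abs_sum_boolSign_fintype (α : Type*) [Fintype α] [DecidableEq α] :
    ∑ τ : α → Bool, |∑ i, boolSign (τ i)| =
      2 ^ Fintype.card α * meanAbsSignSum (Fintype.card α) := by
  rw [meanAbsSignSum, mul_div_cancel₀ _ (by positivity)]
  let e := Fintype.equivFin α
  refine Fintype.sum_equiv (e.arrowCongr (Equiv.refl Bool)) _ _ fun τ => ?_
  rw [← e.symm.sum_comp]
  simp [Equiv.arrowCongr_apply]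

lemma sum_abs_sum_boolSign_finset {ι : Type*} [Fintype ι] [DecidableEq ι] (s : Finset ι) :
    ∑ σ : ι → Bool, |∑ i ∈ s, boolSign (σ i)| = 2 ^ Fintype.card ι * meanAbsSignSum #s := by
  have hcard : Fintype.card {i // i ∉ s} + #s = Fintype.card ι := by
    rw [Fintype.card_subtype_compl, Fintype.card_coe, Nat.sub_add_cancel (card_le_univ s)]
  simp_rw [← sum_coe_sort s]
  rw [← (Equiv.piEquivPiSubtypeProd (· ∈ s) fun _ => Bool).symm.sum_comp, Fintype.sum_prod_type]
  simp only [Equiv.piEquivPiSubtypeProd_symm_apply, coe_mem, dite_true, Subtype.coe_eta,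
    sum_const, card_univ, Fintype.card_fun, Fintype.card_bool, nsmul_eq_mul, Nat.cast_pow,
    Nat.cast_ofNat]
  rw [← mul_sum, sum_abs_sum_boolSign_fintype, Fintype.card_coe, ← mul_assoc, ← pow_add, hcard]

def cubeRespecting {ι κ : Type*} (c : ι → κ) : Set (ι → ℝ) :=
  {f | (∀ i, f i ∈ Set.Icc (-1 : ℝ) 1) ∧ ∀ i j, c i = c j → f i = f j}

section CubeRespecting

variable {ι κ : Type*} [Fintype ι]

lemma exists_mem_cubeRespecting_sum_mul_eq [Fintype κ] [DecidableEq κ] (c : ι → κ) (w : ι → ℝ) :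
    ∃ f ∈ cubeRespecting c, ∑ i, w i * f i = ∑ j, |∑ i ∈ {i | c i = j}, w i| := by
  set S : κ → ℝ := fun j => ∑ i ∈ {i | c i = j}, w i
  refine ⟨fun i => SignType.sign (S (c i)), ⟨fun i => ?_, fun i j h => by simp only [h]⟩, ?_⟩
  · simp only [Set.mem_Icc]
    generalize SignType.sign (S (c i)) = s
    cases s <;> norm_num
  · rw [← sum_fiberwise univ c]
    refine sum_congr rfl fun j _ => ?_
    rw [← self_mul_sign, sum_mul]
    exact sum_congr rfl fun i hi => by dsimp only; rw [(mem_filter.1 hi).2]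

lemma sum_mul_le_sum_abs_of_mem_cubeRespecting {c : ι → κ} {f : ι → ℝ}
    (hf : f ∈ cubeRespecting c) (w : ι → ℝ) : ∑ i, w i * f i ≤ ∑ i, |w i| :=
  sum_le_sum fun i _ => (le_abs_self _).trans <| by
    rw [abs_mul]; exact mul_le_of_le_one_right (abs_nonneg _) (abs_le.2 (hf.1 i))

lemma mul_sum_abs_sum_fiber_le_iSup [Fintype κ] [DecidableEq κ] (c : ι → κ) (w : ι → ℝ) {a : ℝ}
    (ha : 0 ≤ a) :
    a * ∑ j, |∑ i ∈ {i | c i = j}, w i| ≤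
      ⨆ f : cubeRespecting c, a * ∑ i, w i * (f : ι → ℝ) i := by
  obtain ⟨f, hf, hsum⟩ := exists_mem_cubeRespecting_sum_mul_eq c w
  refine hsum ▸ le_ciSup (f := fun f : cubeRespecting c => a * ∑ i, w i * (f : ι → ℝ) i)
    ⟨a * ∑ i, |w i|, ?_⟩ ⟨f, hf⟩
  rintro _ ⟨g, rfl⟩
  exact mul_le_mul_of_nonneg_left (sum_mul_le_sum_abs_of_mem_cubeRespecting g.2 w) ha

end CubeRespecting

theorem rademacher_lower_bound_uniform_partition_general (m p : ℕ) (hm : 1 ≤ m)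
    (hdvd : p ∣ m) (c : Fin m → Fin p)
    (hfib : ∀ j : Fin p, (Finset.univ.filter fun i => c i = j).card = m / p) :
    Real.sqrt ((p : ℝ) / (2 * m)) ≤
      radComplexity m
        {f : Fin m → ℝ | (∀ i, f i ∈ Set.Icc (-1 : ℝ) 1) ∧
          ∀ i j : Fin m, c i = c j → f i = f j} := by
  set n := m / p
  have hm0 : (m : ℝ) ≠ 0 := by positivity
  have hnp : (n : ℝ) * p = m := by exact_mod_cast Nat.div_mul_cancel hdvd
  have hfiber (j : Fin p) :
      (∑ σ : Fin m → Bool, |∑ i ∈ {i | c i = j}, boolSign (σ i)|) / 2 ^ m = meanAbsSignSum n := by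
    rw [sum_abs_sum_boolSign_finset, hfib, Fintype.card_fin, mul_div_cancel_left₀ _ (by positivity)]
  have hsqrt : √((p : ℝ) / (2 * m)) = p / m * √(n / 2) := by
    rw [← Real.sqrt_sq (by positivity : (0 : ℝ) ≤ p / m), ← Real.sqrt_mul (sq_nonneg _)]
    congr 1
    field_simp
    linear_combination -(p : ℝ) * hnp
  calc √((p : ℝ) / (2 * m)) = p / m * √(n / 2) := hsqrt
    _ ≤ p / m * meanAbsSignSum n := by gcongr; exact sqrt_half_le_meanAbsSignSum n
    _ = (∑ σ : Fin m → Bool, 1 / m * ∑ j, |∑ i ∈ {i | c i = j}, boolSign (σ i)|) / 2 ^ m := by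
      rw [← mul_sum, mul_div_assoc, sum_comm, sum_div, sum_congr rfl fun j _ => hfiber j]
      simp only [sum_const, card_univ, Fintype.card_fin, nsmul_eq_mul]
      ring
    _ ≤ radComplexity m (cubeRespecting c) := by
      unfold radComplexity
      gcongr with σ
      exact mul_sum_abs_sum_fiber_le_iSup c _ (by positivity)

theorem rademacher_lower_bound_uniform_partition (m p : ℕ) (hm : 1 ≤ m) (hp : 1 ≤ p)
    (hdvd : p ∣ m) (c : Fin m → Fin p) (hsurj : Function.Surjective c)
    (hfib : ∀ j : Fin p, (Finset.univ.filter fun i => c i = j).card = m / p) :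
    Real.sqrt ((p : ℝ) / (2 * m)) ≤
      radComplexity m
        {f : Fin m → ℝ | (∀ i, f i ∈ Set.Icc (-1 : ℝ) 1) ∧
          ∀ i j : Fin m, c i = c j → f i = f j} :=
  rademacher_lower_bound_uniform_partition_general m p hm hdvd c hfib
end

section
/- Let m ≥ 1 and p ≥ 1, let c : {1,…,m} → {1,…,p} be a coloring, and let F ⊆ [-1,1]^m be a set of vectors each of which respects c, with the zero vector 0 ∈ F. For ε > 0 let N(ε) denote the minimal cardinality of an internal ε-cover of F in the ℓ₂ norm on ℝ^m (a subset C ⊆ F such that every f ∈ F is within ℓ₂-distance ε of some element of C). Then for every α > 0, the empirical Rademacher complexity satisfies R(F) ≤ 4α√p/m + (12/m)·∫_α^{√m} √(log N(ε)) dε. -/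
/-!
Dudley's chaining. Let `εⱼ = √m / 2 ^ j` and let `πⱼ f` be a point of a minimal internal
`εⱼ`-cover within `εⱼ` of `f`; since `N(√m) = 1`, `π₀ f = x₀` does not depend on `f`. For the
first `J` with `ε_J < 4α`,
`⟨σ, f⟩ = ⟨σ, f - π_J f⟩ + ∑_{j < J} ⟨σ, π_{j+1} f - π_j f⟩ + ⟨σ, x₀⟩`.
The increment `π_{j+1} f - π_j f` ranges over at most `N(ε_{j+1})²` vectors of norm
`≤ 3 ε_{j+1}`, so by Massart's lemma the mean of its supremum is at most
`6 ε_{j+1} √(log N(ε_{j+1})) ≤ 12 ∫_{ε_{j+2}}^{ε_{j+1}} √(log N)`, as `N` is antitone.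
The remainder `f - π_J f` respects the colouring, so Cauchy–Schwarz over the colour classes
bounds its correlation with `σ` by `ε_J W(σ)`, where
`W(σ)² = ∑ₖ (∑_{c i = k} σᵢ)² / #{i | c i = k}` has mean at most `p`: this is where `√p`
replaces the usual `√m`.
-/

open Finset

/-- The internal `ε`-covering number of `F ⊆ ℝ^m` with respect to the ℓ₂ norm:
the minimal cardinality of a finite subset `C ⊆ F` such that every `f ∈ F` is
within ℓ₂-distance `ε` of some element of `C`. -/
noncomputable def coveringNumber (m : ℕ) (F : Set (Fin m → ℝ)) (ε : ℝ) : ℕ :=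
  sInf {n : ℕ | ∃ C : Finset (Fin m → ℝ), ↑C ⊆ F ∧ C.card = n ∧
    ∀ f ∈ F, ∃ g ∈ C, Real.sqrt (∑ i, (f i - g i) ^ 2) ≤ ε}


namespace RademacherDudley

open Real MeasureTheory
open scoped BigOperators

section Signs

variable {ι : Type*} [Fintype ι]

noncomputable def boolSign (b : Bool) : ℝ := if b then 1 else -1

noncomputable def signCorr (σ : ι → Bool) (x : ι → ℝ) : ℝ := ∑ i, boolSign (σ i) * x i

noncomputable def l2norm (x : ι → ℝ) : ℝ := ‖WithLp.toLp 2 x‖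

lemma l2norm_sq (x : ι → ℝ) : l2norm x ^ 2 = ∑ i, x i ^ 2 :=
  EuclideanSpace.real_norm_sq_eq _

lemma l2norm_nonneg (x : ι → ℝ) : 0 ≤ l2norm x := norm_nonneg _

lemma l2norm_eq_sqrt (x : ι → ℝ) : l2norm x = √(∑ i, x i ^ 2) := by
  rw [← l2norm_sq, sqrt_sq (l2norm_nonneg x)]

lemma l2norm_sub_le (x y z : ι → ℝ) : l2norm (x - z) ≤ l2norm (x - y) + l2norm (y - z) := by
  simpa only [l2norm, WithLp.toLp_sub] using norm_sub_le_norm_sub_add_norm_sub _ _ _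

lemma l2norm_sub_comm (x y : ι → ℝ) : l2norm (x - y) = l2norm (y - x) := by
  simpa only [l2norm, WithLp.toLp_sub] using norm_sub_rev _ _

lemma signCorr_sub (σ : ι → Bool) (x y : ι → ℝ) :
    signCorr σ (x - y) = signCorr σ x - signCorr σ y := by
  simp only [signCorr, Pi.sub_apply, mul_sub, sum_sub_distrib]

variable [DecidableEq ι]

lemma expect_prod_bool (u : ι → Bool → ℝ) :
    𝔼 σ : ι → Bool, ∏ i, u i (σ i) = ∏ i, (u i true + u i false) / 2 := by
  rw [Fintype.expect_eq_sum_div_card, ← Fintype.prod_sum, prod_div_distrib]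
  simp

/-- The flip `σ ↦ σ[i ↦ !σ i]` is a bijection fixing `g` and negating `boolSign (σ i)`. -/
lemma expect_boolSign_mul_eq_zero (i : ι) (g : (ι → Bool) → ℝ)
    (hg : ∀ σ, g (Function.update σ i (!σ i)) = g σ) :
    𝔼 σ, boolSign (σ i) * g σ = 0 := by
  have hflip : Function.Involutive fun σ : ι → Bool => Function.update σ i (!σ i) := by
    intro σ
    ext j
    rcases eq_or_ne j i with rfl | hj <;> simp [*]
  have h := Fintype.expect_equiv hflip.toPerm (fun σ => boolSign (σ i) * g σ)
    (fun σ => -(boolSign (σ i) * g σ)) fun σ => by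
      simp only [Function.Involutive.coe_toPerm, hg, Function.update_self]
      cases σ i <;> simp [boolSign]
  rw [expect_neg_distrib] at h
  linarith

lemma expect_boolSign_mul_boolSign (i j : ι) :
    𝔼 σ : ι → Bool, boolSign (σ i) * boolSign (σ j) = if i = j then 1 else 0 := by
  split_ifs with hij
  · subst hij
    have : ∀ b, boolSign b * boolSign b = 1 := fun b => by cases b <;> simp [boolSign]
    simp only [this, Fintype.expect_const]
  · exact expect_boolSign_mul_eq_zero i _ fun σ => by simp [Ne.symm hij]

lemma expect_signCorr (x : ι → ℝ) : 𝔼 σ, signCorr σ x = 0 := by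
  simp only [signCorr]
  rw [expect_sum_comm]
  refine sum_eq_zero fun i _ => ?_
  simpa using expect_boolSign_mul_eq_zero i (fun _ => x i) fun _ => rfl

lemma expect_sq_sum_boolSign (A : Finset ι) :
    𝔼 σ : ι → Bool, (∑ i ∈ A, boolSign (σ i)) ^ 2 = #A := by
  simp only [sq, sum_mul_sum]
  rw [expect_sum_comm]
  simp_rw [expect_sum_comm, expect_boolSign_mul_boolSign]
  simp

/-- Hoeffding's lemma for Rademacher sums, via `cosh t ≤ exp (t ^ 2 / 2)`. -/
lemma expect_exp_mul_signCorr_le (x : ι → ℝ) (t : ℝ) :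
    𝔼 σ, exp (t * signCorr σ x) ≤ exp (t ^ 2 * l2norm x ^ 2 / 2) := by
  calc 𝔼 σ, exp (t * signCorr σ x)
      = 𝔼 σ : ι → Bool, ∏ i, exp (t * (boolSign (σ i) * x i)) := by
        simp only [signCorr, mul_sum, exp_sum]
    _ = ∏ i, cosh (t * x i) := by
        rw [expect_prod_bool fun i b => exp (t * (boolSign b * x i))]
        simp [boolSign, cosh_eq]
    _ ≤ ∏ i, exp ((t * x i) ^ 2 / 2) :=
        prod_le_prod (fun i _ => (cosh_pos _).le) fun i _ => cosh_le_exp_half_sq _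
    _ = exp (t ^ 2 * l2norm x ^ 2 / 2) := by
        rw [← exp_sum, l2norm_sq, mul_sum, sum_div]
        simp only [mul_pow]

end Signs

section Massart

lemma expect_log_le_log_expect {α : Type*} {s : Finset α} (hs : s.Nonempty) {Y : α → ℝ}
    (hY : ∀ a ∈ s, 0 < Y a) : 𝔼 a ∈ s, log (Y a) ≤ log (𝔼 a ∈ s, Y a) := by
  set μ := 𝔼 a ∈ s, Y a
  have hμ : 0 < μ := expect_pos hY hs
  -- `log y ≤ log μ + y / μ - 1`, averaged over `s`
  have hpt : ∀ a ∈ s, log (Y a) ≤ log μ + (Y a / μ - 1) := fun a ha => by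
    have := log_le_sub_one_of_pos (div_pos (hY a ha) hμ)
    rw [log_div (hY a ha).ne' hμ.ne'] at this
    linarith
  calc 𝔼 a ∈ s, log (Y a) ≤ 𝔼 a ∈ s, (log μ + (Y a / μ - 1)) := expect_le_expect hpt
    _ = log μ := by
      rw [expect_add_distrib, expect_sub_distrib, ← expect_div,
        div_self hμ.ne', expect_const hs, expect_const hs, sub_self, add_zero]

variable {ι : Type*} [Fintype ι] [DecidableEq ι]

lemma expect_sup'_signCorr_le_of_pos (C : Finset (ι → ℝ)) (hC : C.Nonempty) {r t : ℝ}
    (hr : ∀ x ∈ C, l2norm x ≤ r) (ht : 0 < t) :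
    𝔼 σ, C.sup' hC (signCorr σ) ≤ log #C / t + t * r ^ 2 / 2 := by
  set Y : (ι → Bool) → ℝ := fun σ => ∑ x ∈ C, exp (t * signCorr σ x)
  have hY : ∀ σ, 0 < Y σ := fun σ => sum_pos (fun x _ => exp_pos _) hC
  have hsup : ∀ σ, C.sup' hC (signCorr σ) ≤ log (Y σ) / t := fun σ => by
    obtain ⟨x, hx, hmax⟩ := C.exists_mem_eq_sup' hC (signCorr σ)
    rw [hmax, le_div_iff₀ ht, mul_comm, ← log_exp (t * _)]
    exact log_le_log (exp_pos _)
      (single_le_sum (f := fun y => exp (t * signCorr σ y)) (fun _ _ => (exp_pos _).le) hx)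
  have hEY : 𝔼 σ, Y σ ≤ #C * exp (t ^ 2 * r ^ 2 / 2) := by
    rw [expect_sum_comm, ← nsmul_eq_mul, ← sum_const]
    refine sum_le_sum fun x hx => (expect_exp_mul_signCorr_le x t).trans ?_
    gcongr
    exacts [l2norm_nonneg x, hr x hx]
  calc 𝔼 σ, C.sup' hC (signCorr σ)
      ≤ 𝔼 σ, log (Y σ) / t := expect_le_expect fun σ _ => hsup σ
    _ ≤ log (𝔼 σ, Y σ) / t := by
        rw [← expect_div]
        exact div_le_div_of_nonneg_right
          (expect_log_le_log_expect univ_nonempty fun σ _ => hY σ) ht.le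
    _ ≤ log (#C * exp (t ^ 2 * r ^ 2 / 2)) / t := by
        gcongr
    _ = log #C / t + t * r ^ 2 / 2 := by
        rw [log_mul (by simp [hC.ne_empty]) (exp_pos _).ne', log_exp]
        field_simp

/-- Massart's finite class lemma. -/
theorem expect_sup'_signCorr_le (C : Finset (ι → ℝ)) (hC : C.Nonempty) {r : ℝ} (hr0 : 0 < r)
    (hr : ∀ x ∈ C, l2norm x ≤ r) :
    𝔼 σ, C.sup' hC (signCorr σ) ≤ r * √(2 * log #C) := by
  rcases Nat.lt_or_ge 1 #C with hcard | hcard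
  · have hL : 0 < log #C := log_pos (by exact_mod_cast hcard)
    set s := √(2 * log #C)
    have hs : 0 < s := sqrt_pos.mpr (by positivity)
    have hs2 : s ^ 2 = 2 * log #C := sq_sqrt (by positivity)
    refine (expect_sup'_signCorr_le_of_pos C hC hr (div_pos hs hr0)).trans_eq ?_
    field_simp
    linear_combination -hs2
  · obtain ⟨x, rfl⟩ := card_eq_one.mp (le_antisymm hcard hC.card_pos)
    simp [expect_signCorr]

end Massart

section Colorings

variable {ι κ : Type*} [Fintype ι] [Fintype κ] [DecidableEq κ]

def colorClass (c : ι → κ) (k : κ) : Finset ι := {i | c i = k}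

/-- `colorWeight c σ` is the ℓ₂ norm of the projection of `σ` onto the vectors respecting `c`. -/
noncomputable def colorWeight (c : ι → κ) (σ : ι → Bool) : ℝ :=
  √(∑ k, (∑ i ∈ colorClass c k, boolSign (σ i)) ^ 2 / #(colorClass c k))

omit [Fintype ι] in
lemma sum_mul_le_of_forall_eq {A : Finset ι} {f : ι → ℝ} (hf : ∀ i ∈ A, ∀ j ∈ A, f i = f j)
    (s : ι → ℝ) : ∑ i ∈ A, s i * f i ≤ √(∑ i ∈ A, f i ^ 2) * (|∑ i ∈ A, s i| / √(#A : ℝ)) := by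
  rcases A.eq_empty_or_nonempty with rfl | ⟨i₀, hi₀⟩
  · simp
  have hA : (0 : ℝ) < #A := by exact_mod_cast card_pos.mpr ⟨i₀, hi₀⟩
  have hconst : ∀ i ∈ A, f i = f i₀ := fun i hi => hf i hi i₀ hi₀
  have hsum : ∑ i ∈ A, s i * f i = (∑ i ∈ A, s i) * f i₀ := by
    rw [sum_mul]
    exact sum_congr rfl fun i hi => by rw [hconst i hi]
  have hnorm : √(∑ i ∈ A, f i ^ 2) = √(#A : ℝ) * |f i₀| := by
    rw [sum_congr rfl fun i hi => congrArg (· ^ 2) (hconst i hi), sum_const, nsmul_eq_mul,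
      sqrt_mul hA.le, sqrt_sq_eq_abs]
  calc ∑ i ∈ A, s i * f i ≤ |f i₀| * |∑ i ∈ A, s i| := by
        rw [hsum, mul_comm, ← abs_mul]; exact le_abs_self _
    _ = √(∑ i ∈ A, f i ^ 2) * (|∑ i ∈ A, s i| / √(#A : ℝ)) := by rw [hnorm]; field_simp

lemma sum_colorClass (c : ι → κ) (g : ι → ℝ) :
    ∑ k, ∑ i ∈ colorClass c k, g i = ∑ i, g i :=
  sum_fiberwise univ c g

theorem signCorr_le_l2norm_mul_colorWeight (c : ι → κ) {f : ι → ℝ}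
    (hf : ∀ i j, c i = c j → f i = f j) (σ : ι → Bool) :
    signCorr σ f ≤ l2norm f * colorWeight c σ := by
  have hclass : ∀ k, ∀ i ∈ colorClass c k, ∀ j ∈ colorClass c k, f i = f j := by
    intro k i hi j hj
    simp only [colorClass, mem_filter] at hi hj
    exact hf i j (hi.2.trans hj.2.symm)
  calc signCorr σ f = ∑ k, ∑ i ∈ colorClass c k, boolSign (σ i) * f i :=
        (sum_colorClass c _).symm
    _ ≤ ∑ k, √(∑ i ∈ colorClass c k, f i ^ 2) *
          (|∑ i ∈ colorClass c k, boolSign (σ i)| / √(#(colorClass c k) : ℝ)) :=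
        sum_le_sum fun k _ => sum_mul_le_of_forall_eq (hclass k) _
    _ ≤ √(∑ k, √(∑ i ∈ colorClass c k, f i ^ 2) ^ 2) *
          √(∑ k, (|∑ i ∈ colorClass c k, boolSign (σ i)| / √(#(colorClass c k) : ℝ)) ^ 2) :=
        sum_mul_le_sqrt_mul_sqrt _ _ _
    _ = l2norm f * colorWeight c σ := by
        simp only [sq_sqrt (sum_nonneg fun _ _ => sq_nonneg _), div_pow, sq_abs,
          sq_sqrt (Nat.cast_nonneg _), sum_colorClass, colorWeight, l2norm_eq_sqrt]

theorem expect_colorWeight_le [DecidableEq ι] (c : ι → κ) :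
    𝔼 σ, colorWeight c σ ≤ √(Fintype.card κ) := by
  have hsq : 𝔼 σ, colorWeight c σ ^ 2 ≤ Fintype.card κ := by
    simp only [colorWeight]
    simp_rw [sq_sqrt (sum_nonneg fun _ _ => div_nonneg (sq_nonneg _) (Nat.cast_nonneg _))]
    rw [expect_sum_comm]
    refine (sum_le_sum fun k _ => ?_).trans (b := ∑ _k : κ, (1 : ℝ)) (by simp)
    rw [← expect_div, expect_sq_sum_boolSign]
    exact div_self_le_one _
  have hCS := expect_mul_sq_le_sq_mul_sq univ (colorWeight c) fun _ => (1 : ℝ)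
  simp only [mul_one, one_pow, Fintype.expect_const] at hCS
  exact le_sqrt_of_sq_le (hCS.trans hsq)

end Colorings

section Covers

variable {m : ℕ} {F : Set (Fin m → ℝ)} {ε : ℝ}

def IsInternalCover (F : Set (Fin m → ℝ)) (ε : ℝ) (C : Finset (Fin m → ℝ)) : Prop :=
  ↑C ⊆ F ∧ ∀ f ∈ F, ∃ g ∈ C, l2norm (f - g) ≤ ε

lemma coveringNumber_eq_sInf :
    coveringNumber m F ε = sInf {n | ∃ C, IsInternalCover F ε C ∧ #C = n} := by
  simp only [coveringNumber, IsInternalCover, l2norm_eq_sqrt, Pi.sub_apply, and_assoc,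
    and_comm (a := _ = _)]

lemma coveringNumber_le_card {C : Finset (Fin m → ℝ)} (hC : IsInternalCover F ε C) :
    coveringNumber m F ε ≤ #C := by
  rw [coveringNumber_eq_sInf]
  exact Nat.sInf_le ⟨C, hC, rfl⟩

lemma exists_isInternalCover_card_eq {C : Finset (Fin m → ℝ)} (hC : IsInternalCover F ε C) :
    ∃ C', IsInternalCover F ε C' ∧ #C' = coveringNumber m F ε := by
  rw [coveringNumber_eq_sInf]
  exact Nat.sInf_mem (s := {n | ∃ C, IsInternalCover F ε C ∧ #C = n}) ⟨#C, C, hC, rfl⟩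

lemma card_pos_of_isInternalCover (hF : F.Nonempty) {C : Finset (Fin m → ℝ)}
    (hC : IsInternalCover F ε C) : 0 < #C := by
  obtain ⟨f, hf⟩ := hF
  obtain ⟨g, hg, -⟩ := hC.2 f hf
  exact card_pos.mpr ⟨g, hg⟩

lemma one_le_coveringNumber (hF : F.Nonempty) {C : Finset (Fin m → ℝ)}
    (hC : IsInternalCover F ε C) : 1 ≤ coveringNumber m F ε := by
  obtain ⟨C', hC', hcard⟩ := exists_isInternalCover_card_eq hC
  exact hcard ▸ card_pos_of_isInternalCover hF hC'

variable {R : ℝ}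

lemma exists_isInternalCover (hF : ∀ f ∈ F, l2norm f ≤ R) (hε : 0 < ε) :
    ∃ C, IsInternalCover F ε C := by
  classical
  have hbdd : WithLp.toLp 2 '' F ⊆ Metric.closedBall (0 : EuclideanSpace ℝ (Fin m)) R := by
    rintro _ ⟨f, hf, rfl⟩
    simpa [l2norm] using hF f hf
  obtain ⟨t, hts, htfin, hcov⟩ := Metric.finite_approx_of_totallyBounded
    ((isCompact_closedBall _ _).totallyBounded.subset hbdd) ε hε
  refine ⟨htfin.toFinset.image WithLp.ofLp, ?_, fun f hf => ?_⟩
  · intro _ hg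
    obtain ⟨y, hy, rfl⟩ := mem_image.mp hg
    obtain ⟨g, hgF, rfl⟩ := hts (htfin.mem_toFinset.mp hy)
    exact hgF
  · obtain ⟨y, hy, hfy⟩ := Set.mem_iUnion₂.mp (hcov ⟨f, hf, rfl⟩)
    refine ⟨y.ofLp, mem_image_of_mem _ (htfin.mem_toFinset.mpr hy), ?_⟩
    rw [Metric.mem_ball, dist_eq_norm] at hfy
    exact hfy.le

lemma coveringNumber_antitoneOn (hF : ∀ f ∈ F, l2norm f ≤ R) :
    AntitoneOn (coveringNumber m F) (Set.Ioi 0) := by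
  intro ε hε ε' _ hεε'
  obtain ⟨C₀, hC₀⟩ := exists_isInternalCover hF hε
  obtain ⟨C, hC, hcard⟩ := exists_isInternalCover_card_eq hC₀
  exact hcard ▸ coveringNumber_le_card
    ⟨hC.1, fun f hf => (hC.2 f hf).imp fun _ h => ⟨h.1, h.2.trans hεε'⟩⟩

lemma coveringNumber_eq_one (hF : ∀ f ∈ F, l2norm f ≤ R) (hzero : 0 ∈ F) (hε : R ≤ ε) :
    coveringNumber m F ε = 1 := by
  have hC : IsInternalCover F ε {0} := ⟨by simpa using hzero, fun f hf =>
    ⟨0, mem_singleton_self 0, by simpa using (hF f hf).trans hε⟩⟩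
  exact le_antisymm (coveringNumber_le_card hC) (one_le_coveringNumber ⟨0, hzero⟩ hC)

end Covers

section Integrals

lemma mul_le_integral_of_antitoneOn {g : ℝ → ℝ} {a b : ℝ} (hab : a ≤ b)
    (hg : AntitoneOn g (Set.Icc a b)) : (b - a) * g b ≤ ∫ x in a..b, g x := by
  have hint : IntervalIntegrable g volume a b :=
    AntitoneOn.intervalIntegrable (by rwa [Set.uIcc_of_le hab])
  simpa using intervalIntegral.integral_mono_on hab intervalIntegrable_const hint
    fun x hx => hg hx ⟨hab, le_rfl⟩ hx.2

lemma sum_integral_adjacent_intervals_of_antitoneOn {g : ℝ → ℝ} (hg : AntitoneOn g (Set.Ioi 0))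
    {a : ℕ → ℝ} (ha : ∀ k, a (k + 1) ≤ a k) (hpos : ∀ k, 0 < a k) (n : ℕ) :
    ∑ k ∈ range n, ∫ x in a (k + 1)..a k, g x = ∫ x in a n..a 0, g x := by
  have hint : ∀ k < n, IntervalIntegrable g volume (a k) (a (k + 1)) :=
    fun k _ => AntitoneOn.intervalIntegrable <| hg.mono fun x hx =>
      (hpos (k + 1)).trans_le ((le_inf (ha k) le_rfl).trans hx.1)
  calc ∑ k ∈ range n, ∫ x in a (k + 1)..a k, g x
      = -∑ k ∈ range n, ∫ x in a k..a (k + 1), g x := by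
        rw [← sum_neg_distrib]
        exact sum_congr rfl fun k _ => intervalIntegral.integral_symm _ _
    _ = ∫ x in a n..a 0, g x := by
        rw [intervalIntegral.sum_integral_adjacent_intervals hint, intervalIntegral.integral_symm,
          neg_neg]

variable {m : ℕ} {F : Set (Fin m → ℝ)} {R : ℝ}

lemma antitoneOn_sqrt_log_coveringNumber (hF : ∀ f ∈ F, l2norm f ≤ R) (hF0 : F.Nonempty) :
    AntitoneOn (fun ε => √(log (coveringNumber m F ε))) (Set.Ioi 0) := by
  intro a ha b hb hab
  obtain ⟨C, hC⟩ := exists_isInternalCover hF hb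
  have hpos : (0 : ℝ) < coveringNumber m F b := by exact_mod_cast one_le_coveringNumber hF0 hC
  exact sqrt_le_sqrt <| log_le_log hpos <| by exact_mod_cast coveringNumber_antitoneOn hF ha hb hab

lemma integral_sqrt_log_coveringNumber_nonneg (hF : ∀ f ∈ F, l2norm f ≤ R) (hzero : 0 ∈ F)
    (α : ℝ) : 0 ≤ ∫ ε in α..R, √(log (coveringNumber m F ε)) := by
  rcases le_total α R with hαR | hRα
  · exact intervalIntegral.integral_nonneg hαR fun _ _ => sqrt_nonneg _
  · -- beyond `R` the single point `0` covers `F`, so the integrand vanishes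
    have hvanish : Set.EqOn (fun ε => √(log (coveringNumber m F ε))) 0 (Set.uIcc R α) := by
      intro ε hε
      rw [Set.uIcc_of_le hRα] at hε
      simp [coveringNumber_eq_one hF hzero hε.1]
    rw [intervalIntegral.integral_symm, intervalIntegral.integral_congr hvanish]
    simp

lemma integral_sqrt_log_coveringNumber_mono (hF : ∀ f ∈ F, l2norm f ≤ R) (hF0 : F.Nonempty)
    {α a b : ℝ} (hα : 0 < α) (hαa : α ≤ a) (hab : a ≤ b) (hbR : b ≤ R) :
    ∫ ε in a..b, √(log (coveringNumber m F ε)) ≤ ∫ ε in α..R, √(log (coveringNumber m F ε)) :=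
  intervalIntegral.integral_mono_interval hαa hab hbR
    (ae_of_all _ fun _ => sqrt_nonneg _)
    (AntitoneOn.intervalIntegrable <| (antitoneOn_sqrt_log_coveringNumber hF hF0).mono
      fun _ hx => hα.trans_le ((le_inf le_rfl (hαa.trans (hab.trans hbR))).trans hx.1))

end Integrals

section Chaining

variable {ι : Type*} [Fintype ι]

open Classical in
noncomputable def linkSet (A B : Finset (ι → ℝ)) (r : ℝ) : Finset (ι → ℝ) :=
  ((A ×ˢ B).filter fun q => l2norm (q.1 - q.2) ≤ r).image fun q => q.1 - q.2

variable {A B : Finset (ι → ℝ)} {r : ℝ}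

lemma sub_mem_linkSet {a b f : ι → ℝ} {δ : ℝ} (ha : a ∈ A) (hb : b ∈ B)
    (hfa : l2norm (f - a) ≤ δ) (hfb : l2norm (f - b) ≤ 2 * δ) : a - b ∈ linkSet A B (3 * δ) := by
  have hab : l2norm (a - b) ≤ 3 * δ := calc
    l2norm (a - b) ≤ l2norm (a - f) + l2norm (f - b) := l2norm_sub_le _ _ _
    _ ≤ δ + 2 * δ := add_le_add (l2norm_sub_comm f a ▸ hfa) hfb
    _ = 3 * δ := by ring
  unfold linkSet
  exact mem_image.mpr ⟨(a, b), mem_filter.mpr ⟨mem_product.mpr ⟨ha, hb⟩, hab⟩, rfl⟩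

lemma l2norm_le_of_mem_linkSet {x : ι → ℝ} (hx : x ∈ linkSet A B r) : l2norm x ≤ r := by
  unfold linkSet at hx
  obtain ⟨q, hq, rfl⟩ := mem_image.mp hx
  exact (mem_filter.mp hq).2

lemma card_linkSet_le : #(linkSet A B r) ≤ #A * #B := by
  unfold linkSet
  exact card_image_le.trans ((card_filter_le _ _).trans (card_product _ _).le)

lemma expect_sup'_linkSet_le [DecidableEq ι] {N : ℕ} (hA : #A ≤ N) (hB : #B ≤ N) (hr : 0 < r)
    (hne : (linkSet A B r).Nonempty) :
    𝔼 σ, (linkSet A B r).sup' hne (signCorr σ) ≤ 2 * r * √(log N) := by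
  refine (expect_sup'_signCorr_le _ hne hr fun x hx => l2norm_le_of_mem_linkSet hx).trans ?_
  have hL : (0 : ℝ) < #(linkSet A B r) := by exact_mod_cast hne.card_pos
  have hLN : (#(linkSet A B r) : ℝ) ≤ (N : ℝ) ^ 2 := by
    exact_mod_cast card_linkSet_le.trans ((Nat.mul_le_mul hA hB).trans_eq (sq N).symm)
  calc r * √(2 * log #(linkSet A B r)) ≤ r * √(2 ^ 2 * log N) := by
        refine mul_le_mul_of_nonneg_left (sqrt_le_sqrt ?_) hr.le
        calc 2 * log #(linkSet A B r) ≤ 2 * log ((N : ℝ) ^ 2) := by gcongr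
          _ = 2 ^ 2 * log N := by rw [log_pow]; ring
    _ = 2 * r * √(log N) := by
        rw [sqrt_mul (by positivity), sqrt_sq zero_le_two]
        ring

lemma signCorr_le_of_chain {κ : Type*} [Fintype κ] [DecidableEq κ] (c : ι → κ) (σ : ι → Bool)
    {f : ι → ℝ} {g : ℕ → ι → ℝ} {J : ℕ} {δ : ℝ}
    (hfar : ∀ i j, c i = c j → (f - g J) i = (f - g J) j) (hdist : l2norm (f - g J) ≤ δ)
    (M : ℕ → ℝ) (hM : ∀ j < J, signCorr σ (g (j + 1) - g j) ≤ M j) :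
    signCorr σ f ≤ δ * colorWeight c σ + ∑ j ∈ range J, M j + signCorr σ (g 0) := by
  have htelescope : signCorr σ f = signCorr σ (f - g J) +
      ∑ j ∈ range J, signCorr σ (g (j + 1) - g j) + signCorr σ (g 0) := by
    simp only [signCorr_sub, sum_range_sub fun j => signCorr σ (g j)]
    ring
  rw [htelescope]
  gcongr with j hj
  · exact (signCorr_le_l2norm_mul_colorWeight c hfar σ).trans
      (mul_le_mul_of_nonneg_right hdist (sqrt_nonneg _))
  · exact hM j (mem_range.mp hj)

variable {m : ℕ} {F : Set (Fin m → ℝ)} {R : ℝ}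

lemma expect_sup'_linkSet_le_integral (hF : ∀ f ∈ F, l2norm f ≤ R) (hF0 : F.Nonempty)
    {A B : Finset (Fin m → ℝ)} {δ : ℝ} (hδ : 0 < δ) (hA : #A ≤ coveringNumber m F δ)
    (hB : #B ≤ coveringNumber m F δ) (hne : (linkSet A B (3 * δ)).Nonempty) :
    𝔼 σ, (linkSet A B (3 * δ)).sup' hne (signCorr σ) ≤
      12 * ∫ t in δ / 2..δ, √(log (coveringNumber m F t)) := by
  refine (expect_sup'_linkSet_le hA hB (by positivity) hne).trans ?_
  have h := mul_le_integral_of_antitoneOn (half_le_self hδ.le)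
    ((antitoneOn_sqrt_log_coveringNumber hF hF0).mono fun t ht => (half_pos hδ).trans_le ht.1)
  linarith

end Chaining

section Dudley

variable {κ : Type*} [Fintype κ] [DecidableEq κ] {m : ℕ} {F : Set (Fin m → ℝ)}
  {ε : ℕ → ℝ} {Cov : ℕ → Finset (Fin m → ℝ)}

lemma linkSet_nonempty (hF : F.Nonempty) {A B : Finset (Fin m → ℝ)} {δ : ℝ}
    (hA : IsInternalCover F δ A) (hB : IsInternalCover F (2 * δ) B) :
    (linkSet A B (3 * δ)).Nonempty := by
  obtain ⟨f, hf⟩ := hF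
  obtain ⟨a, ha, hfa⟩ := hA.2 f hf
  obtain ⟨b, hb, hfb⟩ := hB.2 f hf
  exact ⟨a - b, sub_mem_linkSet ha hb hfa hfb⟩

lemma iSup_signCorr_le_of_isInternalCover [Nonempty F] (c : Fin m → κ)
    (hresp : ∀ f ∈ F, ∀ i j, c i = c j → f i = f j) (hε : ∀ j, ε j ≤ 2 * ε (j + 1))
    (hCov : ∀ j, IsInternalCover F (ε j) (Cov j)) {x₀ : Fin m → ℝ} (hx₀ : Cov 0 = {x₀})
    (hne : ∀ j, (linkSet (Cov (j + 1)) (Cov j) (3 * ε (j + 1))).Nonempty) (J : ℕ)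
    (σ : Fin m → Bool) :
    ⨆ f : F, signCorr σ (f : Fin m → ℝ) ≤ ε J * colorWeight c σ +
      ∑ j ∈ range J, (linkSet (Cov (j + 1)) (Cov j) (3 * ε (j + 1))).sup' (hne j) (signCorr σ) +
        signCorr σ x₀ := by
  refine ciSup_le fun ⟨f, hf⟩ => ?_
  choose g hg hg_dist using fun j => (hCov j).2 f hf
  have hg₀ : g 0 = x₀ := by simpa [hx₀] using hg 0
  have hfar : ∀ i j, c i = c j → (f - g J) i = (f - g J) j := fun i j hij => by
    simp only [Pi.sub_apply, hresp f hf i j hij, hresp _ ((hCov J).1 (hg J)) i j hij]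
  have hchain := signCorr_le_of_chain c σ hfar (hg_dist J) _ fun j _ =>
    le_sup' (signCorr σ) (sub_mem_linkSet (hg (j + 1)) (hg j) (hg_dist (j + 1))
      ((hg_dist j).trans (hε j)))
  rwa [hg₀] at hchain

theorem expect_iSup_signCorr_le (c : Fin m → κ) (hresp : ∀ f ∈ F, ∀ i j, c i = c j → f i = f j)
    (hzero : 0 ∈ F) {r : ℝ} (hr : 0 < r) (hF : ∀ f ∈ F, l2norm f ≤ r) (J : ℕ) :
    𝔼 σ, ⨆ f : F, signCorr σ (f : Fin m → ℝ) ≤ r / 2 ^ J * √(Fintype.card κ) +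
      12 * ∫ t in r / 2 ^ (J + 1)..r / 2, √(log (coveringNumber m F t)) := by
  have : Nonempty F := ⟨⟨0, hzero⟩⟩
  set ε : ℕ → ℝ := fun j => r / 2 ^ j
  have hε : ∀ j, 0 < ε j := fun j => by positivity
  have hε_succ : ∀ j, ε j = 2 * ε (j + 1) := fun j => by
    simp only [ε, pow_succ, ← div_div]
    ring
  have hε_le : ∀ j, ε (j + 1) ≤ ε j := fun j => by linarith [hε_succ j, hε (j + 1)]
  choose Cov hCov hCard using fun j =>
    exists_isInternalCover_card_eq (exists_isInternalCover hF (hε j)).choose_spec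
  obtain ⟨x₀, hx₀⟩ := card_eq_one.mp
    ((hCard 0).trans (coveringNumber_eq_one hF hzero (by simp [ε])))
  have hne : ∀ j, (linkSet (Cov (j + 1)) (Cov j) (3 * ε (j + 1))).Nonempty := fun j =>
    linkSet_nonempty ⟨0, hzero⟩ (hCov (j + 1)) (hε_succ j ▸ hCov j)
  have hlevel : ∀ j, 𝔼 σ, (linkSet (Cov (j + 1)) (Cov j) (3 * ε (j + 1))).sup' (hne j)
      (signCorr σ) ≤ 12 * ∫ t in ε (j + 1 + 1)..ε (j + 1), √(log (coveringNumber m F t)) :=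
    fun j => by
      rw [show ε (j + 1 + 1) = ε (j + 1) / 2 by linarith [hε_succ (j + 1)]]
      refine expect_sup'_linkSet_le_integral hF ⟨0, hzero⟩ (hε _) (hCard _).le ?_ _
      exact (hCard j).trans_le (coveringNumber_antitoneOn hF (hε _) (hε _) (hε_le j))
  calc 𝔼 σ, ⨆ f : F, signCorr σ (f : Fin m → ℝ)
      ≤ 𝔼 σ, (ε J * colorWeight c σ + ∑ j ∈ range J,
          (linkSet (Cov (j + 1)) (Cov j) (3 * ε (j + 1))).sup' (hne j) (signCorr σ) +
          signCorr σ x₀) :=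
        expect_le_expect fun σ _ => iSup_signCorr_le_of_isInternalCover c hresp
          (fun j => (hε_succ j).le) hCov hx₀ hne J σ
    _ = ε J * 𝔼 σ, colorWeight c σ + ∑ j ∈ range J,
          𝔼 σ, (linkSet (Cov (j + 1)) (Cov j) (3 * ε (j + 1))).sup' (hne j) (signCorr σ) := by
        rw [expect_add_distrib, expect_add_distrib, expect_signCorr, add_zero, ← mul_expect,
          expect_sum_comm]
    _ ≤ ε J * √(Fintype.card κ) +
          ∑ j ∈ range J, 12 * ∫ t in ε (j + 1 + 1)..ε (j + 1), √(log (coveringNumber m F t)) := by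
        gcongr with j
        exacts [expect_colorWeight_le c, hlevel j]
    _ = ε J * √(Fintype.card κ) +
          12 * ∫ t in ε (J + 1)..ε 1, √(log (coveringNumber m F t)) := by
        rw [← mul_sum, sum_integral_adjacent_intervals_of_antitoneOn
          (antitoneOn_sqrt_log_coveringNumber hF ⟨0, hzero⟩) (fun j => hε_le (j + 1))
          (fun j => hε (j + 1)) J]
    _ = _ := by simp only [ε, pow_one]

end Dudley

lemma l2norm_le_sqrt_card {ι : Type*} [Fintype ι] {f : ι → ℝ}
    (hf : ∀ i, f i ∈ Set.Icc (-1 : ℝ) 1) : l2norm f ≤ √(Fintype.card ι) := by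
  rw [l2norm_eq_sqrt]
  refine sqrt_le_sqrt ((sum_le_sum fun i _ => ?_).trans_eq (b := ∑ _i : ι, (1 : ℝ)) (by simp))
  exact (sq_le_one_iff_abs_le_one _).mpr (abs_le.mpr (hf i))

lemma radComplexity_eq_expect (m : ℕ) (F : Set (Fin m → ℝ)) :
    radComplexity m F = (𝔼 σ, ⨆ f : F, signCorr σ (f : Fin m → ℝ)) / m := by
  simp only [radComplexity, Fintype.expect_eq_sum_div_card, Fintype.card_fun, Fintype.card_bool,
    Fintype.card_fin, ← Real.mul_iSup_of_nonneg (one_div_nonneg.mpr (Nat.cast_nonneg m)),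
    ← mul_sum, signCorr, boolSign]
  push_cast
  ring

/-- `J` is the least `n` with `r / 2 ^ n < 4 α`. -/
lemma exists_dyadic_scale {r α : ℝ} (hα : 0 < α) :
    ∃ J : ℕ, r / 2 ^ J < 4 * α ∧ (J = 0 ∨ α ≤ r / 2 ^ (J + 1)) := by
  have hex : ∃ n : ℕ, r / 2 ^ n < 4 * α := by
    obtain ⟨n, hn⟩ := pow_unbounded_of_one_lt (r / (4 * α)) one_lt_two
    rw [div_lt_iff₀ (by positivity), mul_comm] at hn
    exact ⟨n, (div_lt_iff₀ (by positivity)).mpr hn⟩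
  refine ⟨Nat.find hex, Nat.find_spec hex, ?_⟩
  rcases hJ : Nat.find hex with _ | k
  · exact .inl rfl
  · have hprev := not_lt.mp (Nat.find_min hex (show k < Nat.find hex by omega))
    rw [pow_succ, pow_succ, ← div_div, ← div_div]
    exact .inr (by linarith)

end RademacherDudley

open RademacherDudley in
theorem rademacher_dudley_with_colors_general (m p : ℕ) (hm : 1 ≤ m)
    (c : Fin m → Fin p) (F : Set (Fin m → ℝ))
    (hresp : ∀ f ∈ F, ∀ i j : Fin m, c i = c j → f i = f j)
    (hbdd : ∀ f ∈ F, ∀ i, f i ∈ Set.Icc (-1 : ℝ) 1)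
    (hzero : (fun _ : Fin m => (0 : ℝ)) ∈ F)
    (α : ℝ) (hα : 0 < α) :
    radComplexity m F ≤
      4 * α * Real.sqrt p / m +
        (12 / m) *
          ∫ ε in α..Real.sqrt m, Real.sqrt (Real.log (coveringNumber m F ε)) := by
  have hm' : (0 : ℝ) < m := by exact_mod_cast hm
  have hF : ∀ f ∈ F, l2norm f ≤ √m := fun f hf => by
    simpa using l2norm_le_sqrt_card (hbdd f hf)
  obtain ⟨J, hJ, hJα⟩ := exists_dyadic_scale (r := √m) hα
  have hchain := expect_iSup_signCorr_le c hresp hzero (Real.sqrt_pos.mpr hm') hF J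
  have hint : ∫ t in √m / 2 ^ (J + 1)..√m / 2, √(Real.log (coveringNumber m F t)) ≤
      ∫ t in α..√m, √(Real.log (coveringNumber m F t)) := by
    rcases hJα with rfl | hαJ
    · simpa using integral_sqrt_log_coveringNumber_nonneg hF hzero α
    · refine integral_sqrt_log_coveringNumber_mono hF ⟨_, hzero⟩ hα hαJ ?_
        (half_le_self (by positivity))
      exact div_le_div_of_nonneg_left (Real.sqrt_nonneg _) two_pos
        (le_self_pow₀ one_le_two J.succ_ne_zero)
  rw [radComplexity_eq_expect, div_le_iff₀ hm']
  calc _ ≤ √m / 2 ^ J * √p +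
        12 * ∫ t in √m / 2 ^ (J + 1)..√m / 2, √(Real.log (coveringNumber m F t)) := by
        simpa only [Fintype.card_fin] using hchain
    _ ≤ 4 * α * √p + 12 * ∫ t in α..√m, √(Real.log (coveringNumber m F t)) := by gcongr
    _ = _ := by field_simp

theorem rademacher_dudley_with_colors (m p : ℕ) (hm : 1 ≤ m) (hp : 1 ≤ p)
    (c : Fin m → Fin p) (F : Set (Fin m → ℝ))
    (hresp : ∀ f ∈ F, ∀ i j : Fin m, c i = c j → f i = f j)
    (hbdd : ∀ f ∈ F, ∀ i, f i ∈ Set.Icc (-1 : ℝ) 1)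
    (hzero : (fun _ : Fin m => (0 : ℝ)) ∈ F)
    (α : ℝ) (hα : 0 < α) :
    radComplexity m F ≤
      4 * α * Real.sqrt p / m +
        (12 / m) *
          ∫ ε in α..Real.sqrt m, Real.sqrt (Real.log (coveringNumber m F ε)) :=
  rademacher_dudley_with_colors_general m p hm c F hresp hbdd hzero α hα
end
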